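/- Let L be a recurrent language on alphabet A containing A. In the Rauzy graph G_{1,1}, two letters a, b ∈ A are Stallings-equivalent if and only if a and b, viewed as left extensions of the empty word, lie in the same connected component of the extension graph E(ε). -/

import Mathlib

open List

section Prelude

variable {A V : Type*}

structure LDigraph (V A : Type*) where
  E : Set (V × A × V)

namespace LDigraph

inductive Step (G : LDigraph V A) : V → V → FreeGroup A → Prop
  | fwd {x a y} : (x, a, y) ∈ G.E → Step G x y (FreeGroup.of a)
  | bwd {x a y} : (x, a, y) ∈ G.E → Step G y x (FreeGroup.of a)⁻¹

inductive PathLabel (G : LDigraph V A) : V → V → FreeGroup A → Prop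
  | nil (x) : PathLabel G x x 1
  | cons {x y z g h} : G.Step x y g → PathLabel G y z h → PathLabel G x z (g * h)

inductive PosPath (G : LDigraph V A) : V → V → List A → Prop
  | nil (x) : PosPath G x x []
  | cons {x a y z w} : (x, a, y) ∈ G.E → PosPath G y z w → PosPath G x z (a :: w)

def loopLabels (G : LDigraph V A) (x : V) : Set (FreeGroup A) :=
  {g | G.PathLabel x x g}

def Connected (G : LDigraph V A) : Prop :=
  ∀ x y : V, ∃ g, G.PathLabel x y g

def quot (G : LDigraph V A) (r : Setoid V) : LDigraph (Quotient r) A :=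
  ⟨{e | ∃ x a y, (x, a, y) ∈ G.E ∧ e = (Quotient.mk r x, a, Quotient.mk r y)}⟩

def GroupPreserving (G : LDigraph V A) (r : Setoid V) : Prop :=
  ∀ x : V, G.loopLabels x = (G.quot r).loopLabels (Quotient.mk r x)

end LDigraph

/-- The image of a word in the free group. -/
def wordToFG (w : List A) : FreeGroup A := (w.map FreeGroup.of).prod

def FactorClosed (L : Set (List A)) : Prop := ∀ w ∈ L, ∀ u : List A, u <:+: w → u ∈ L

def Recurrent (L : Set (List A)) : Prop :=
  FactorClosed L ∧ ∀ u ∈ L, ∀ v ∈ L, ∃ w : List A, w ≠ [] ∧ u ++ w ++ v ∈ L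

def UniformlyRecurrent (L : Set (List A)) : Prop :=
  FactorClosed L ∧ ∀ u ∈ L, ∃ N : ℕ, ∀ w ∈ L, N ≤ w.length → u <:+: w

/-- The Rauzy graph `G_{m,k}`: vertices are the words of `L` of length `m`, and every
word `x ∈ L` of length `m+1` gives an edge from `init x` to `tail x` labeled `x(k)`. -/
def rauzy (L : Set (List A)) (m k : ℕ) : LDigraph (List A) A :=
  ⟨{e | ∃ x a, x ∈ L ∧ x.length = m + 1 ∧ x[k]? = some a ∧ e = (x.dropLast, a, x.tail)}⟩

/-- The extension graph `E(w)`, a bipartite graph on two copies of `A`. -/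
def extGraph (L : Set (List A)) (w : List A) : SimpleGraph (A ⊕ A) where
  Adj x y := ∃ a b, a :: (w ++ [b]) ∈ L ∧
    ((x = Sum.inl a ∧ y = Sum.inr b) ∨ (x = Sum.inr b ∧ y = Sum.inl a))
  symm := by constructor; rintro x y ⟨a, b, h, hc⟩; exact ⟨a, b, h, by tauto⟩
  loopless := by
    constructor
    rintro x ⟨a, b, h, ⟨h1, h2⟩ | ⟨h1, h2⟩⟩ <;> rw [h1] at h2 <;> exact absurd h2 (by simp)

/-- The set of genuine vertices of the extension graph of `w`. -/
def extVerts (L : Set (List A)) (w : List A) : Set (A ⊕ A) :=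
  Sum.elim (fun a => a :: w ∈ L) (fun b => w ++ [b] ∈ L)

/-- The extension graph of `w` is connected (all genuine vertices are mutually reachable). -/
def ExtConnected (L : Set (List A)) (w : List A) : Prop :=
  ∀ x ∈ extVerts L w, ∀ y ∈ extVerts L w, (extGraph L w).Reachable x y

/-- The extension graph of order `(d,d)` of the word `y`. -/
def extGraphK (L : Set (List A)) (d : ℕ) (y : List A) : SimpleGraph (List A ⊕ List A) where
  Adj p q := ∃ u v : List A, u.length = d ∧ v.length = d ∧ u ++ y ++ v ∈ L ∧
    ((p = Sum.inl u ∧ q = Sum.inr v) ∨ (p = Sum.inr v ∧ q = Sum.inl u))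
  symm := by constructor; rintro p q ⟨u, v, h1, h2, h3, hc⟩; exact ⟨u, v, h1, h2, h3, by tauto⟩
  loopless := by
    constructor
    rintro p ⟨u, v, _, _, _, ⟨h1, h2⟩ | ⟨h1, h2⟩⟩ <;> rw [h1] at h2 <;> exact absurd h2 (by simp)

/-- A language is suffix-connected if for every nonempty word `w ∈ L` there exists a depth
`1 ≤ d ≤ |w|+1` such that the natural embedding of the left extensions of `w` in the
extension graph `E_{d,d}(tail^{d-1} w)` lies in a single connected component. -/
def SuffixConnected (L : Set (List A)) : Prop :=
  ∀ w ∈ L, w ≠ [] → ∃ d : ℕ, 1 ≤ d ∧ d ≤ w.length + 1 ∧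
    ∀ a b : A, a :: w ∈ L → b :: w ∈ L →
      (extGraphK L d (w.drop (d - 1))).Reachable
        (Sum.inl (a :: w.take (d - 1))) (Sum.inl (b :: w.take (d - 1)))

open Classical in
/-- The number of occurrences of `u` in `w`. -/
noncomputable def occCount (u w : List A) : ℕ :=
  (List.range (w.length + 1)).countP fun i => decide (u <+: w.drop i)

/-- The return set `R_{u,v}`. -/
noncomputable def ReturnSet (L : Set (List A)) (u v : List A) : Set (List A) :=
  {r | r ∈ L ∧ u ++ r ++ v ∈ L ∧ (u ++ v) <+: (u ++ r ++ v) ∧ (u ++ v) <:+ (u ++ r ++ v) ∧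
    occCount (u ++ v) (u ++ r ++ v) = 2}

end Prelude

namespace LDigraph

variable {V A : Type*} {G : LDigraph V A} {x y z : V} {g h : FreeGroup A}

theorem Step.pathLabel (hs : G.Step x y g) : G.PathLabel x y g := by
  simpa using PathLabel.cons hs (PathLabel.nil y)

theorem PathLabel.trans (hxy : G.PathLabel x y g) (hyz : G.PathLabel y z h) :
    G.PathLabel x z (g * h) := by
  induction hxy with
  | nil => simpa using hyz
  | cons hs _ ih => simpa only [mul_assoc] using PathLabel.cons hs (ih hyz)

theorem PathLabel.mul_lift_eq {H : Type*} [Group H] (f : V → H) (φ : A → H)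
    (hf : ∀ x a y, (x, a, y) ∈ G.E → f x * φ a = f y) (hp : G.PathLabel x y g) :
    f x * FreeGroup.lift φ g = f y := by
  induction hp with
  | nil => simp
  | cons hs _ ih =>
    rw [map_mul, ← mul_assoc, ← ih]
    congr 1
    cases hs with
    | fwd he => simpa using hf _ _ _ he
    | bwd he => simp [← hf _ _ _ he]

theorem pathLabel_of_reachable {W : Type*} {H : SimpleGraph W} (ι : W → V)
    (ℓ : W → FreeGroup A) (hadj : ∀ s t, H.Adj s t → G.PathLabel (ι s) (ι t) ((ℓ s)⁻¹ * ℓ t))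
    {s t : W} (hst : H.Reachable s t) : G.PathLabel (ι s) (ι t) ((ℓ s)⁻¹ * ℓ t) := by
  have hrt := (SimpleGraph.reachable_iff_reflTransGen s t).mp hst
  clear hst
  induction hrt with
  | refl => simpa using PathLabel.nil (ι s)
  | tail _ hadj' ih => simpa [mul_assoc] using ih.trans (hadj _ _ hadj')

end LDigraph

section RauzyOneOne

variable {A : Type*} {L : Set (List A)}

theorem mem_rauzy_one_one_E_iff {u v : List A} {c : A} :
    (u, c, v) ∈ (rauzy L 1 1).E ↔ ∃ p, u = [p] ∧ v = [c] ∧ [p, c] ∈ L := by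
  constructor
  · rintro ⟨x, d, hx, hlen, hget, heq⟩
    obtain ⟨p, q, rfl⟩ := List.length_eq_two.mp hlen
    simp only [List.getElem?_cons_succ, List.getElem?_cons_zero, Option.some.injEq] at hget
    simp only [List.dropLast, List.tail, Prod.mk.injEq] at heq
    obtain ⟨rfl, rfl, rfl⟩ := heq
    exact ⟨p, rfl, by rw [hget], by rwa [← hget]⟩
  · rintro ⟨p, rfl, rfl, hL⟩
    exact ⟨[p, c], c, hL, rfl, rfl, rfl⟩

/-- Read in `G_{1,1}`, the edge `{inl p, inr c}` of `E(ε)` is the edge `[p] -c→ [c]`; an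
`inl` vertex contributes the trivial label and an `inr c` vertex the label `c`. -/
theorem rauzy_one_one_pathLabel_of_extGraph_adj {s t : A ⊕ A}
    (hst : (extGraph L []).Adj s t) :
    (rauzy L 1 1).PathLabel [Sum.elim id id s] [Sum.elim id id t]
      ((Sum.elim (fun _ ↦ 1) FreeGroup.of s)⁻¹ * Sum.elim (fun _ ↦ 1) FreeGroup.of t) := by
  obtain ⟨p, c, hL, ⟨rfl, rfl⟩ | ⟨rfl, rfl⟩⟩ := hst
  all_goals
    have he : ([p], c, [c]) ∈ (rauzy L 1 1).E := mem_rauzy_one_one_E_iff.mpr ⟨p, rfl, rfl, hL⟩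
  · simpa using (LDigraph.Step.fwd he).pathLabel
  · simpa using (LDigraph.Step.bwd he).pathLabel

theorem rauzy_one_one_pathLabel_of_reachable {a b : A}
    (h : (extGraph L []).Reachable (Sum.inl a) (Sum.inl b)) :
    (rauzy L 1 1).PathLabel [a] [b] 1 := by
  simpa using LDigraph.pathLabel_of_reachable _ _ (fun _ _ ↦
    rauzy_one_one_pathLabel_of_extGraph_adj) h

/-- Sending the vertex `[x]` to the component of `inl x` and the letter `c` to
`[inr c]⁻¹ [inl c]` maps `G_{1,1}` into the Cayley graph of the free group on the components of
`E(ε)`, because an edge `[p] -c→ [c]` puts `inl p` and `inr c` in one component. -/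
theorem extGraph_reachable_of_rauzy_one_one_pathLabel {a b : A}
    (h : (rauzy L 1 1).PathLabel [a] [b] 1) :
    (extGraph L []).Reachable (Sum.inl a) (Sum.inl b) := by
  let comp (s : A ⊕ A) := FreeGroup.of ((extGraph L []).connectedComponentMk s)
  have hf : ∀ u c v, (u, c, v) ∈ (rauzy L 1 1).E →
      (u.map (comp ∘ Sum.inl)).prod * ((comp (Sum.inr c))⁻¹ * comp (Sum.inl c)) =
        (v.map (comp ∘ Sum.inl)).prod := by
    intro u c v he
    obtain ⟨p, rfl, rfl, hL⟩ := mem_rauzy_one_one_E_iff.mp he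
    have hpc : comp (Sum.inl p) = comp (Sum.inr c) :=
      congrArg FreeGroup.of (SimpleGraph.ConnectedComponent.eq.mpr
        (SimpleGraph.Adj.reachable ⟨p, c, hL, Or.inl ⟨rfl, rfl⟩⟩))
    simp [hpc]
  have hab := h.mul_lift_eq _ _ hf
  simp only [List.map_cons, List.map_nil, List.prod_singleton, map_one, mul_one] at hab
  exact SimpleGraph.ConnectedComponent.eq.mp (FreeGroup.of_injective hab)

end RauzyOneOne

theorem stallings_G11_iff_component_general {A : Type*} (L : Set (List A)) (a b : A) :
    (rauzy L 1 1).PathLabel [a] [b] 1 ↔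
      (extGraph L ([] : List A)).Reachable (Sum.inl a) (Sum.inl b) :=
  ⟨extGraph_reachable_of_rauzy_one_one_pathLabel, rauzy_one_one_pathLabel_of_reachable⟩

/-- In the Rauzy graph `G_{1,1}`, two letters are Stallings-equivalent (joined by a
trivially-labeled path) iff, as left extensions of the empty word, they lie in the same
connected component of the extension graph of the empty word. -/
theorem stallings_G11_iff_component {A : Type*} (L : Set (List A)) (hrec : Recurrent L)
    (hA : ∀ a : A, [a] ∈ L) (a b : A) :
    (rauzy L 1 1).PathLabel [a] [b] 1 ↔
      (extGraph L ([] : List A)).Reachable (Sum.inl a) (Sum.inl b) :=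
  stallings_G11_iff_component_general L a b
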